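/- arXiv:2006.05069 — 4 statements merged into one kernel-verified Lean document; each statement's English description precedes it below -/
import Mathlib

section
/- Let A be a positive semidefinite operator on a complex Hilbert space H and T an A-bounded operator. Then max{w_A(T), ‖T‖_A²} ≤ dw_A(T) ≤ √(w_A(T)² + ‖T‖_A⁴). -/
noncomputable section

namespace DW

variable {H : Type*} [NormedAddCommGroup H] [InnerProductSpace ℂ H]

/-- The semi-inner product induced by `A`: `⟨x,y⟩_A = ⟨Ax, y⟩`. -/
def innA (A : H →L[ℂ] H) (x y : H) : ℂ := inner ℂ (A x) y

/-- The seminorm induced by `A`. -/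
def normA (A : H →L[ℂ] H) (x : H) : ℝ := Real.sqrt (innA A x x).re

/-- `T` is `A`-bounded. -/
def IsABounded (A T : H →L[ℂ] H) : Prop := ∃ c > 0, ∀ x, normA A (T x) ≤ c * normA A x

/-- `S` is an `A`-adjoint of `T`. -/
def IsAAdjointPair (A T S : H →L[ℂ] H) : Prop := ∀ x y, innA A (T x) y = innA A x (S y)

/-- The `A`-operator seminorm. -/
def opNormA (A T : H →L[ℂ] H) : ℝ := sSup {r | ∃ x, normA A x = 1 ∧ r = normA A (T x)}

/-- The `A`-minimum modulus. -/
def mA (A T : H →L[ℂ] H) : ℝ := sInf {r | ∃ x, normA A x = 1 ∧ r = normA A (T x)}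

/-- The `A`-numerical radius. -/
def wA (A T : H →L[ℂ] H) : ℝ :=
  sSup {r | ∃ x, normA A x = 1 ∧ r = ‖innA A (T x) x‖}

/-- The `A`-Crawford number. -/
def cA (A T : H →L[ℂ] H) : ℝ :=
  sInf {r | ∃ x, normA A x = 1 ∧ r = ‖innA A (T x) x‖}

/-- The `A`-Davis-Wielandt radius. -/
def dwA (A T : H →L[ℂ] H) : ℝ :=
  sSup {r | ∃ x, normA A x = 1 ∧
    r = Real.sqrt (‖innA A (T x) x‖ ^ 2 + normA A (T x) ^ 4)}

/-- The semi-inner product on `H ⊕ H` induced by `𝔸 = diag(A,A)`. -/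
def innA2 (A : H →L[ℂ] H) (z w : H × H) : ℂ := innA A z.1 w.1 + innA A z.2 w.2

/-- The seminorm on `H ⊕ H` induced by `𝔸 = diag(A,A)`. -/
def normA2 (A : H →L[ℂ] H) (z : H × H) : ℝ := Real.sqrt (innA2 A z z).re

/-- The `𝔸`-numerical radius on `H ⊕ H`, `𝔸 = diag(A,A)`. -/
def wA2 (A : H →L[ℂ] H) (T : H × H →L[ℂ] H × H) : ℝ :=
  sSup {r | ∃ z, normA2 A z = 1 ∧ r = ‖innA2 A (T z) z‖}

/-- The `𝔸`-Davis-Wielandt radius on `H ⊕ H`, `𝔸 = diag(A,A)`. -/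
def dwA2 (A : H →L[ℂ] H) (T : H × H →L[ℂ] H × H) : ℝ :=
  sSup {r | ∃ z, normA2 A z = 1 ∧
    r = Real.sqrt (‖innA2 A (T z) z‖ ^ 2 + normA2 A (T z) ^ 4)}

/-- The block operator `[[0, X], [Y, 0]]` on `H ⊕ H`. -/
def offDiag (X Y : H →L[ℂ] H) : H × H →L[ℂ] H × H :=
  (X.comp (ContinuousLinearMap.snd ℂ H H)).prod (Y.comp (ContinuousLinearMap.fst ℂ H H))

end DW

/-!
On the `A`-unit sphere put `a = |⟨Tx, x⟩_A|` and `b = ‖Tx‖_A`. Then `√(a² + b⁴)` dominates both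
`a` and `b²` and is monotone in `a, b ≥ 0`, so all three bounds hold for suprema of arbitrary
nonnegative real functions, provided these suprema are finite. Here `b` is bounded because `T` is
`A`-bounded, and `a ≤ b` by the Cauchy–Schwarz inequality for the semi-inner product `⟨·,·⟩_A`.
-/

section SupBounds

variable {ι : Type*} {p : ι → Prop} {a b : ι → ℝ}

lemma sSup_setOf_exists_eq_nonneg {f : ι → ℝ} (hf : ∀ i, 0 ≤ f i) :
    0 ≤ sSup {r | ∃ i, p i ∧ r = f i} :=
  Real.sSup_nonneg <| by rintro r ⟨i, -, rfl⟩; exact hf i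

lemma bddAbove_sqrt_sq_add_pow_four (ha : ∀ i, 0 ≤ a i) (hb : ∀ i, 0 ≤ b i)
    (hba : BddAbove {r | ∃ i, p i ∧ r = a i}) (hbb : BddAbove {r | ∃ i, p i ∧ r = b i}) :
    BddAbove {r | ∃ i, p i ∧ r = √(a i ^ 2 + b i ^ 4)} := by
  obtain ⟨M, hM⟩ := hba
  obtain ⟨N, hN⟩ := hbb
  refine ⟨√(M ^ 2 + N ^ 4), ?_⟩
  rintro r ⟨i, hi, rfl⟩
  gcongr
  exacts [ha i, hM ⟨i, hi, rfl⟩, hb i, hN ⟨i, hi, rfl⟩]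

lemma sSup_le_sSup_sqrt_sq_add_pow_four
    (hbdd : BddAbove {r | ∃ i, p i ∧ r = √(a i ^ 2 + b i ^ 4)}) :
    sSup {r | ∃ i, p i ∧ r = a i} ≤ sSup {r | ∃ i, p i ∧ r = √(a i ^ 2 + b i ^ 4)} := by
  refine Real.sSup_le ?_ (sSup_setOf_exists_eq_nonneg fun _ ↦ Real.sqrt_nonneg _)
  rintro r ⟨i, hi, rfl⟩
  calc a i ≤ √(a i ^ 2 + b i ^ 4) :=
        Real.le_sqrt_of_sq_le (le_add_of_nonneg_right (by positivity))
    _ ≤ _ := le_csSup hbdd ⟨i, hi, rfl⟩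

lemma sSup_sq_le_sSup_sqrt_sq_add_pow_four (hb : ∀ i, 0 ≤ b i)
    (hbdd : BddAbove {r | ∃ i, p i ∧ r = √(a i ^ 2 + b i ^ 4)}) :
    sSup {r | ∃ i, p i ∧ r = b i} ^ 2 ≤
      sSup {r | ∃ i, p i ∧ r = √(a i ^ 2 + b i ^ 4)} := by
  set D := sSup {r | ∃ i, p i ∧ r = √(a i ^ 2 + b i ^ 4)}
  have hD : 0 ≤ D := sSup_setOf_exists_eq_nonneg fun _ ↦ Real.sqrt_nonneg _
  rw [← Real.le_sqrt (sSup_setOf_exists_eq_nonneg hb) hD]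
  refine Real.sSup_le ?_ (Real.sqrt_nonneg D)
  rintro r ⟨i, hi, rfl⟩
  rw [Real.le_sqrt (hb i) hD]
  calc b i ^ 2 ≤ √(a i ^ 2 + b i ^ 4) :=
        Real.le_sqrt_of_sq_le (by linarith [sq_nonneg (a i), pow_mul (b i) 2 2])
    _ ≤ D := le_csSup hbdd ⟨i, hi, rfl⟩

lemma sSup_sqrt_sq_add_pow_four_le (ha : ∀ i, 0 ≤ a i) (hb : ∀ i, 0 ≤ b i)
    (hba : BddAbove {r | ∃ i, p i ∧ r = a i}) (hbb : BddAbove {r | ∃ i, p i ∧ r = b i}) :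
    sSup {r | ∃ i, p i ∧ r = √(a i ^ 2 + b i ^ 4)} ≤
      √(sSup {r | ∃ i, p i ∧ r = a i} ^ 2 + sSup {r | ∃ i, p i ∧ r = b i} ^ 4) := by
  refine Real.sSup_le ?_ (Real.sqrt_nonneg _)
  rintro r ⟨i, hi, rfl⟩
  gcongr
  exacts [ha i, le_csSup hba ⟨i, hi, rfl⟩, hb i, le_csSup hbb ⟨i, hi, rfl⟩]

end SupBounds

namespace DW

variable {H : Type*} [NormedAddCommGroup H] [InnerProductSpace ℂ H] {A T : H →L[ℂ] H}

lemma normA_nonneg (x : H) : 0 ≤ normA A x := Real.sqrt_nonneg _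

abbrev preInnerProductSpaceCoreA (hA : A.IsPositive) : PreInnerProductSpace.Core ℂ H where
  inner := innA A
  conj_inner_symm x y := by rw [innA, innA, inner_conj_symm]; exact (hA.isSymmetric x y).symm
  re_inner_nonneg := hA.re_inner_nonneg_left
  add_left x y z := by simp [innA]
  smul_left x y r := by simp [innA, mul_comm]

lemma norm_innA_le (hA : A.IsPositive) (x y : H) : ‖innA A x y‖ ≤ normA A x * normA A y :=
  @InnerProductSpace.Core.norm_inner_le_norm ℂ H _ _ _ (preInnerProductSpaceCoreA hA) x y

lemma norm_innA_apply_self_le (hA : A.IsPositive) {x : H} (hx : normA A x = 1) :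
    ‖innA A (T x) x‖ ≤ normA A (T x) := by
  simpa [hx] using norm_innA_le hA (T x) x

lemma IsABounded.bddAbove_normA (hT : IsABounded A T) :
    BddAbove {r | ∃ x, normA A x = 1 ∧ r = normA A (T x)} := by
  obtain ⟨c, -, hc⟩ := hT
  refine ⟨c, ?_⟩
  rintro r ⟨x, hx, rfl⟩
  simpa [hx] using hc x

lemma IsABounded.bddAbove_norm_innA (hA : A.IsPositive) (hT : IsABounded A T) :
    BddAbove {r | ∃ x, normA A x = 1 ∧ r = ‖innA A (T x) x‖} := by
  obtain ⟨c, hc⟩ := hT.bddAbove_normA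
  refine ⟨c, ?_⟩
  rintro r ⟨x, hx, rfl⟩
  exact (norm_innA_apply_self_le hA hx).trans (hc ⟨x, hx, rfl⟩)

end DW

open DW

variable {H : Type*} [NormedAddCommGroup H] [InnerProductSpace ℂ H] [CompleteSpace H]

theorem stmt0 (A T : H →L[ℂ] H) (hA : A.IsPositive) (hT : IsABounded A T) :
    max (wA A T) (opNormA A T ^ 2) ≤ dwA A T ∧
      dwA A T ≤ Real.sqrt (wA A T ^ 2 + opNormA A T ^ 4) := by
  have ha (x : H) : 0 ≤ ‖innA A (T x) x‖ := norm_nonneg _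
  have hb (x : H) : 0 ≤ normA A (T x) := normA_nonneg (T x)
  have hbdd_a := hT.bddAbove_norm_innA hA
  have hbdd_b := hT.bddAbove_normA
  have hbdd_dw := bddAbove_sqrt_sq_add_pow_four ha hb hbdd_a hbdd_b
  exact ⟨max_le (sSup_le_sSup_sqrt_sq_add_pow_four hbdd_dw)
      (sSup_sq_le_sSup_sqrt_sq_add_pow_four hb hbdd_dw),
    sSup_sqrt_sq_add_pow_four_le ha hb hbdd_a hbdd_b⟩
end
end

section
/- Let A be positive semidefinite and x, y, e ∈ H with ‖e‖_A = 1. Then |⟨x,e⟩_A · ⟨e,y⟩_A| ≤ (1/2)(|⟨x,y⟩_A| + ‖x‖_A‖y‖_A). -/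
noncomputable section

/-!
Since `A = √A * √A` with `√A` self-adjoint, `⟨x, y⟩_A = ⟪√A x, √A y⟫`, so the claim is Buzano's
inequality for `√A x`, `√A y` and the unit vector `√A e`. For Buzano, `⟪u, w⟫⟪w, v⟫ = ⟪Pu, v⟫`
with `P` the orthogonal projection onto `𝕜 ∙ w`, and `2P = 1 + R` where the reflection `R`
is an isometry; Cauchy–Schwarz for `⟪Ru, v⟫` finishes.
-/

open scoped InnerProductSpace

section Buzano

variable {𝕜 E : Type*} [RCLike 𝕜] [NormedAddCommGroup E] [InnerProductSpace 𝕜 E]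

theorem two_mul_norm_inner_starProjection_le (K : Submodule 𝕜 E) [K.HasOrthogonalProjection]
    (u v : E) : 2 * ‖⟪K.starProjection u, v⟫_𝕜‖ ≤ ‖⟪u, v⟫_𝕜‖ + ‖u‖ * ‖v‖ :=
  calc 2 * ‖⟪K.starProjection u, v⟫_𝕜‖
      = ‖⟪u, v⟫_𝕜 + ⟪K.reflection u, v⟫_𝕜‖ := by
        rw [← inner_add_left, K.reflection_apply, add_sub_cancel, two_smul, inner_add_left,
          ← two_mul, norm_mul, RCLike.norm_two]
    _ ≤ ‖⟪u, v⟫_𝕜‖ + ‖K.reflection u‖ * ‖v‖ := by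
        grw [norm_add_le, norm_inner_le_norm (K.reflection u)]
    _ = ‖⟪u, v⟫_𝕜‖ + ‖u‖ * ‖v‖ := by rw [LinearIsometryEquiv.norm_map]

theorem norm_inner_mul_inner_le_of_norm_eq_one {w : E} (hw : ‖w‖ = 1) (u v : E) :
    ‖⟪u, w⟫_𝕜 * ⟪w, v⟫_𝕜‖ ≤ (1 / 2) * (‖⟪u, v⟫_𝕜‖ + ‖u‖ * ‖v‖) := by
  have hproj : ⟪(𝕜 ∙ w).starProjection u, v⟫_𝕜 = ⟪u, w⟫_𝕜 * ⟪w, v⟫_𝕜 := by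
    rw [Submodule.starProjection_unit_singleton 𝕜 hw, inner_smul_left, inner_conj_symm]
  linarith [hproj ▸ two_mul_norm_inner_starProjection_le (𝕜 ∙ w) u v]

end Buzano

namespace DW

variable {H : Type*} [NormedAddCommGroup H] [InnerProductSpace ℂ H] [CompleteSpace H]

theorem innA_eq_inner_sqrt {A : H →L[ℂ] H} (hA : A.IsPositive) (x y : H) :
    innA A x y = ⟪CFC.sqrt A x, CFC.sqrt A y⟫_ℂ := by
  have hA₀ : 0 ≤ A := (ContinuousLinearMap.nonneg_iff_isPositive A).mpr hA
  have hsqrt : (CFC.sqrt A).IsSymmetric :=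
    ContinuousLinearMap.isSelfAdjoint_iff_isSymmetric.mp (CFC.sqrt_nonneg A).isSelfAdjoint
  calc innA A x y = ⟪(CFC.sqrt A * CFC.sqrt A) x, y⟫_ℂ := by
        rw [CFC.sqrt_mul_sqrt_self A hA₀, innA]
    _ = ⟪CFC.sqrt A x, CFC.sqrt A y⟫_ℂ := hsqrt _ _

theorem normA_eq_norm_sqrt {A : H →L[ℂ] H} (hA : A.IsPositive) (x : H) :
    normA A x = ‖CFC.sqrt A x‖ := by
  rw [normA, innA_eq_inner_sqrt hA, norm_eq_sqrt_re_inner (𝕜 := ℂ)]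
  rfl

end DW

open DW

variable {H : Type*} [NormedAddCommGroup H] [InnerProductSpace ℂ H] [CompleteSpace H]

theorem stmt8 (A : H →L[ℂ] H) (hA : A.IsPositive) (x y e : H) (he : normA A e = 1) :
    ‖innA A x e * innA A e y‖ ≤
      (1 / 2) * (‖innA A x y‖ + normA A x * normA A y) := by
  simp only [innA_eq_inner_sqrt hA, normA_eq_norm_sqrt hA] at he ⊢
  exact norm_inner_mul_inner_le_of_norm_eq_one he _ _
end
end

section
/- Let A be positive semidefinite and T an operator admitting an A-adjoint. Then dw_A(T)² ≤ (1/2)(w_A(T²) + ‖T‖_A²) + ‖T‖_A⁴. -/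
noncomputable section

open DW

variable {H : Type*} [NormedAddCommGroup H] [InnerProductSpace ℂ H] [CompleteSpace H]

set_option maxHeartbeats 1000000 in
theorem stmt12 (A T : H →L[ℂ] H) (hA : A.IsPositive)
    (hT : ∃ T', IsAAdjointPair A T T') :
    dwA A T ^ 2 ≤ (1 / 2) * (wA A (T.comp T) + opNormA A T ^ 2) + opNormA A T ^ 4 := by
  classical
  obtain ⟨T', hT'⟩ := hT
  have h0 : 0 ≤ A := (ContinuousLinearMap.nonneg_iff_isPositive A).mpr hA
  set B : H →L[ℂ] H := CFC.sqrt A with hBdef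
  have hBB : B * B = A := CFC.sqrt_mul_sqrt_self A h0
  have hBsym : ∀ u v : H, (inner ℂ (B u) v : ℂ) = inner ℂ u (B v) :=
    (ContinuousLinearMap.isSelfAdjoint_iff_isSymmetric.mp
      (IsSelfAdjoint.of_nonneg (CFC.sqrt_nonneg A)))
  have key : ∀ u v : H, innA A u v = inner ℂ (B u) (B v) := by
    intro u v
    have hA' : A u = B (B u) := by rw [← hBB]; rfl
    rw [innA, hA', hBsym]
  have keyN : ∀ u : H, normA A u = ‖B u‖ := by
    intro u
    rw [normA, key]
    have hre : RCLike.re (inner ℂ (B u) (B u) : ℂ) = ‖B u‖ ^ 2 := inner_self_eq_norm_sq _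
    rw [RCLike.re_to_complex] at hre
    rw [hre]
    exact Real.sqrt_sq (norm_nonneg _)
  have hadj : ∀ u v : H, (inner ℂ (B (T u)) (B v) : ℂ) = inner ℂ (B u) (B (T' v)) := by
    intro u v; rw [← key, ← key]; exact hT' u v
  -- nonnegativity of the RHS pieces
  have hw0 : 0 ≤ wA A (T.comp T) := by
    apply Real.sSup_nonneg
    rintro r ⟨x, hx, rfl⟩
    exact norm_nonneg _
  have hc0 : 0 ≤ opNormA A T := by
    apply Real.sSup_nonneg
    rintro r ⟨x, hx, rfl⟩
    rw [keyN]; exact norm_nonneg _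
  have hRHS0 : 0 ≤ (1 / 2) * (wA A (T.comp T) + opNormA A T ^ 2) + opNormA A T ^ 4 := by
    have h2 : (0:ℝ) ≤ opNormA A T ^ 2 := by positivity
    have h4 : (0:ℝ) ≤ opNormA A T ^ 4 := by positivity
    linarith
  have hd0 : 0 ≤ dwA A T := by
    apply Real.sSup_nonneg
    rintro r ⟨x, hx, rfl⟩
    exact Real.sqrt_nonneg _
  -- degenerate cases
  set S : Set ℝ := {r | ∃ x, normA A x = 1 ∧
    r = Real.sqrt (‖innA A (T x) x‖ ^ 2 + normA A (T x) ^ 4)} with hSdef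
  rcases Set.eq_empty_or_nonempty S with hS | hSne
  · rw [dwA, ← hSdef, hS, Real.sSup_empty]
    simpa using hRHS0
  by_cases hbdd : BddAbove S
  swap
  · rw [dwA, ← hSdef, Real.sSup_of_not_bddAbove hbdd]
    simpa using hRHS0
  obtain ⟨M, hM⟩ := hbdd
  -- the operator-norm set is nonempty and bounded
  set So : Set ℝ := {r | ∃ x, normA A x = 1 ∧ r = normA A (T x)} with hSodef
  obtain ⟨r0, x0, hx0, hr0⟩ := hSne
  have hSone : So.Nonempty := ⟨normA A (T x0), x0, hx0, rfl⟩
  have hSobdd : BddAbove So := by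
    refine ⟨Real.sqrt M, ?_⟩
    rintro r ⟨x, hx, rfl⟩
    have hmem : Real.sqrt (‖innA A (T x) x‖ ^ 2 + normA A (T x) ^ 4) ∈ S :=
      ⟨x, hx, rfl⟩
    have hle : Real.sqrt (‖innA A (T x) x‖ ^ 2 + normA A (T x) ^ 4) ≤ M := hM hmem
    have h1 : normA A (T x) ^ 2 ≤ M := by
      have e1 : normA A (T x) ^ 2 = Real.sqrt (normA A (T x) ^ 4) := by
        rw [show normA A (T x) ^ 4 = (normA A (T x) ^ 2) ^ 2 by ring,
          Real.sqrt_sq (by positivity)]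
      have e2 : Real.sqrt (normA A (T x) ^ 4)
          ≤ Real.sqrt (‖innA A (T x) x‖ ^ 2 + normA A (T x) ^ 4) :=
        Real.sqrt_le_sqrt (le_add_of_nonneg_left (by positivity))
      linarith
    have h2 := Real.sqrt_le_sqrt h1
    rwa [Real.sqrt_sq (by rw [keyN]; exact norm_nonneg _)] at h2
  set c : ℝ := opNormA A T with hcdef
  have hcx : ∀ x : H, normA A x = 1 → ‖B (T x)‖ ≤ c := by
    intro x hx
    rw [← keyN]
    exact le_csSup hSobdd ⟨x, hx, rfl⟩
  -- T is A-bounded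
  have hTb : ∀ y : H, ‖B (T y)‖ ≤ c * ‖B y‖ := by
    intro y
    rcases eq_or_ne ‖B y‖ 0 with hy | hy
    · have h1 : ‖B (T y)‖ ^ 2 = RCLike.re (inner ℂ (B (T y)) (B (T y)) : ℂ) :=
        (inner_self_eq_norm_sq _).symm
      have h2 : (inner ℂ (B (T y)) (B (T y)) : ℂ) = inner ℂ (B y) (B (T' (T y))) := hadj y (T y)
      have h3 : ‖(inner ℂ (B y) (B (T' (T y))) : ℂ)‖ ≤ ‖B y‖ * ‖B (T' (T y))‖ :=
        norm_inner_le_norm _ _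
      have h4 : RCLike.re (inner ℂ (B y) (B (T' (T y))) : ℂ)
          ≤ ‖(inner ℂ (B y) (B (T' (T y))) : ℂ)‖ := RCLike.re_le_norm _
      have h5 : ‖B (T y)‖ ^ 2 ≤ 0 := by
        rw [h1, h2]
        calc RCLike.re (inner ℂ (B y) (B (T' (T y))) : ℂ)
            ≤ ‖B y‖ * ‖B (T' (T y))‖ := le_trans h4 h3
          _ = 0 := by rw [hy, zero_mul]
      rw [hy, mul_zero]
      nlinarith [h5, norm_nonneg (B (T y))]
    · have hy0 : 0 < ‖B y‖ := lt_of_le_of_ne (norm_nonneg _) (Ne.symm hy)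
      have hnc : ‖((‖B y‖ : ℝ) : ℂ)‖ = ‖B y‖ := by
        rw [Complex.norm_real, Real.norm_eq_abs, abs_of_nonneg (norm_nonneg _)]
      have hz1 : normA A ((((‖B y‖ : ℝ) : ℂ))⁻¹ • y) = 1 := by
        rw [keyN, map_smul, norm_smul, norm_inv, hnc]
        field_simp
      have h7 := hcx _ hz1
      rw [map_smul, map_smul, norm_smul, norm_inv, hnc] at h7
      have h8 : ‖B (T y)‖ ≤ ‖B y‖ * c := (inv_mul_le_iff₀ hy0).mp h7
      linarith [h8, mul_comm (‖B y‖) c]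
  -- T' is A-bounded by the same constant
  have hT'b : ∀ y : H, ‖B (T' y)‖ ≤ c * ‖B y‖ := by
    intro y
    have h1 : ‖B (T' y)‖ ^ 2 = RCLike.re (inner ℂ (B (T' y)) (B (T' y)) : ℂ) :=
      (inner_self_eq_norm_sq _).symm
    have h2 : (inner ℂ (B (T (T' y))) (B y) : ℂ) = inner ℂ (B (T' y)) (B (T' y)) := hadj (T' y) y
    have h3 : RCLike.re (inner ℂ (B (T (T' y))) (B y) : ℂ) ≤ ‖B (T (T' y))‖ * ‖B y‖ :=
      le_trans (RCLike.re_le_norm _) (norm_inner_le_norm _ _)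
    have h4 : ‖B (T (T' y))‖ ≤ c * ‖B (T' y)‖ := hTb (T' y)
    have h5 : ‖B (T' y)‖ ^ 2 ≤ c * ‖B (T' y)‖ * ‖B y‖ := by
      rw [h1, ← h2]
      calc RCLike.re (inner ℂ (B (T (T' y))) (B y) : ℂ) ≤ ‖B (T (T' y))‖ * ‖B y‖ := h3
        _ ≤ c * ‖B (T' y)‖ * ‖B y‖ :=
            mul_le_mul_of_nonneg_right h4 (norm_nonneg _)
    rcases eq_or_lt_of_le (norm_nonneg (B (T' y))) with hn | hn
    · rw [← hn]; exact mul_nonneg hc0 (norm_nonneg _)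
    · nlinarith [h5, hn]
  -- the numerical-radius set for T² is bounded
  set Sw : Set ℝ := {r | ∃ x, normA A x = 1 ∧
    r = ‖innA A ((T.comp T) x) x‖} with hSwdef
  have hSwbdd : BddAbove Sw := by
    refine ⟨c * c, ?_⟩
    rintro r ⟨x, hx, rfl⟩
    have hx1 : ‖B x‖ = 1 := by rw [← keyN]; exact hx
    rw [ContinuousLinearMap.comp_apply, key]
    calc ‖(inner ℂ (B (T (T x))) (B x) : ℂ)‖ ≤ ‖B (T (T x))‖ * ‖B x‖ := norm_inner_le_norm _ _
      _ = ‖B (T (T x))‖ := by rw [hx1, mul_one]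
      _ ≤ c * ‖B (T x)‖ := hTb (T x)
      _ ≤ c * (c * ‖B x‖) := mul_le_mul_of_nonneg_left (hTb x) hc0
      _ = c * c := by rw [hx1, mul_one]
  have hwx : ∀ x : H, normA A x = 1 →
      ‖innA A (T (T x)) x‖ ≤ wA A (T.comp T) := by
    intro x hx
    apply le_csSup hSwbdd
    exact ⟨x, hx, by rw [ContinuousLinearMap.comp_apply]⟩
  set w : ℝ := wA A (T.comp T) with hwdef
  -- the main pointwise estimate
  have main : ∀ r ∈ S, r ≤ Real.sqrt ((1 / 2) * (w + c ^ 2) + c ^ 4) := by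
    rintro r ⟨x, hx, rfl⟩
    have hx1 : ‖B x‖ = 1 := by rw [← keyN]; exact hx
    set p : ℂ := inner ℂ (B (T x)) (B x) with hpdef
    set q : ℂ := inner ℂ (B (T (T x))) (B x) with hqdef
    have e1 : (inner ℂ (B x) (B (T' x)) : ℂ) = p := (hadj x x).symm
    have e2 : (inner ℂ (B (T x)) (B (T' x)) : ℂ) = q := (hadj (T x) x).symm
    set u : H := (2 * (starRingEnd ℂ) p) • x - T x with hudef
    have hBu : B u = (2 * (starRingEnd ℂ) p) • B x - B (T x) := by
      rw [hudef, map_sub, map_smul]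
    have hu1 : (inner ℂ (B u) (B (T' x)) : ℂ) = 2 * p ^ 2 - q := by
      rw [hBu, inner_sub_left, inner_smul_left, e1, e2]
      have e5 : (starRingEnd ℂ) (2 * (starRingEnd ℂ) p) = 2 * p := by
        rw [map_mul, Complex.conj_conj, map_ofNat]
      rw [e5]; ring
    have hu2 : ‖B u‖ = ‖B (T x)‖ := by
      have hsq : ‖B u‖ ^ 2 = ‖B (T x)‖ ^ 2 := by
        have hip : (inner ℂ (B x) (B (T x)) : ℂ) = (starRingEnd ℂ) p := by
          rw [hpdef, ← inner_conj_symm]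
        rw [hBu, norm_sub_sq (𝕜 := ℂ), inner_smul_left, hip, norm_smul, hx1, mul_one]
        have e5 : (starRingEnd ℂ) (2 * (starRingEnd ℂ) p) * (starRingEnd ℂ) p
            = ((2 * ‖p‖ ^ 2 : ℝ) : ℂ) := by
          rw [map_mul, Complex.conj_conj, map_ofNat, mul_assoc, Complex.mul_conj]
          push_cast [Complex.normSq_eq_norm_sq]
          ring
        rw [e5]
        have e6 : RCLike.re (((2 * ‖p‖ ^ 2 : ℝ) : ℂ)) = 2 * ‖p‖ ^ 2 := by
          rw [RCLike.re_to_complex, Complex.ofReal_re]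
        rw [e6]
        have e7 : ‖(2 * (starRingEnd ℂ) p : ℂ)‖ = 2 * ‖p‖ := by
          rw [norm_mul, RCLike.norm_conj]
          simp
        rw [e7]
        ring
      have h1 := congrArg Real.sqrt hsq
      rwa [Real.sqrt_sq (norm_nonneg _), Real.sqrt_sq (norm_nonneg _)] at h1
    have h3 : ‖(2 * p ^ 2 - q : ℂ)‖ ≤ ‖B u‖ * ‖B (T' x)‖ := by
      rw [← hu1]; exact norm_inner_le_norm _ _
    have hTx : ‖B (T x)‖ ≤ c := hcx x hx
    have hT'x : ‖B (T' x)‖ ≤ c := by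
      have := hT'b x; rwa [hx1, mul_one] at this
    have h4 : ‖(2 * p ^ 2 - q : ℂ)‖ ≤ c ^ 2 := by
      calc ‖(2 * p ^ 2 - q : ℂ)‖ ≤ ‖B u‖ * ‖B (T' x)‖ := h3
        _ = ‖B (T x)‖ * ‖B (T' x)‖ := by rw [hu2]
        _ ≤ c * c := mul_le_mul hTx hT'x (norm_nonneg _) hc0
        _ = c ^ 2 := by ring
    have hq : ‖q‖ ≤ w := by
      have := hwx x hx
      rwa [key, ← hqdef] at this
    have h5 : 2 * ‖p‖ ^ 2 ≤ c ^ 2 + w := by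
      have e3 : ‖(2 * p ^ 2 : ℂ)‖ = 2 * ‖p‖ ^ 2 := by
        rw [norm_mul, norm_pow]; simp
      have e4 : ‖(2 * p ^ 2 : ℂ)‖ ≤ ‖(2 * p ^ 2 - q : ℂ)‖ + ‖q‖ := by
        calc ‖(2 * p ^ 2 : ℂ)‖ = ‖(2 * p ^ 2 - q + q : ℂ)‖ := by rw [sub_add_cancel]
          _ ≤ ‖(2 * p ^ 2 - q : ℂ)‖ + ‖q‖ := norm_add_le _ _
      linarith
    have h6 : ‖B (T x)‖ ^ 4 ≤ c ^ 4 :=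
      pow_le_pow_left₀ (norm_nonneg _) hTx 4
    have h7 : ‖innA A (T x) x‖ ^ 2 + normA A (T x) ^ 4
        ≤ (1 / 2) * (w + c ^ 2) + c ^ 4 := by
      rw [key, keyN, ← hpdef]
      linarith
    exact Real.sqrt_le_sqrt h7
  have hdw : dwA A T ≤ Real.sqrt ((1 / 2) * (w + c ^ 2) + c ^ 4) :=
    Real.sSup_le main (Real.sqrt_nonneg _)
  calc dwA A T ^ 2 ≤ Real.sqrt ((1 / 2) * (w + c ^ 2) + c ^ 4) ^ 2 :=
        pow_le_pow_left₀ hd0 hdw 2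
    _ = (1 / 2) * (w + c ^ 2) + c ^ 4 := Real.sq_sqrt hRHS0
end
end

section
/- Let A be positive semidefinite on H, 𝔸 = diag(A,A), and let U on H⊕H be 𝔸-unitary (i.e., ‖Uz‖_𝔸 = ‖U^♯z‖_𝔸 = ‖z‖_𝔸 for all z, where U^♯ is the 𝔸-adjoint). Then for X, Y A-bounded and any θ ∈ ℝ: dw_𝔸([[0,X],[e^{iθ}Y,0]]) = dw_𝔸([[0,X],[Y,0]]) and dw_𝔸([[0,X],[Y,0]]) = dw_𝔸([[0,Y],[X,0]]). -/
noncomputable section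

open DW

/-! Both identities are instances of the invariance of `dw_𝔸` under `T ↦ c • U T U⁻¹` for an
`𝔸`-unitary `U` and `|c| = 1`: the swap of the two coordinates of `H ⊕ H` exchanges `X` and `Y`,
and `U = diag(1, μ)` with `μ² = c⁻¹` turns `[[0, X], [c Y, 0]]` into `μ⁻¹ U⁻¹ [[0, X], [Y, 0]] U`. -/

namespace DW

variable {H : Type*} [NormedAddCommGroup H] [InnerProductSpace ℂ H] {A : H →L[ℂ] H}

lemma innA_smul_left (c : ℂ) (x y : H) : innA A (c • x) y = starRingEnd ℂ c * innA A x y := by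
  simp only [innA, map_smul, inner_smul_left]

lemma innA_smul_right (c : ℂ) (x y : H) : innA A x (c • y) = c * innA A x y := by
  simp only [innA, inner_smul_right]

lemma innA_smul_smul_of_norm_eq_one {c : ℂ} (hc : ‖c‖ = 1) (x y : H) :
    innA A (c • x) (c • y) = innA A x y := by
  rw [innA_smul_left, innA_smul_right, ← mul_assoc, Complex.conj_mul', hc]
  simp

lemma innA2_smul_left (c : ℂ) (z w : H × H) :
    innA2 A (c • z) w = starRingEnd ℂ c * innA2 A z w := by
  simp only [innA2, Prod.smul_fst, Prod.smul_snd, innA_smul_left, mul_add]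

lemma innA2_smul_smul_of_norm_eq_one {c : ℂ} (hc : ‖c‖ = 1) (z w : H × H) :
    innA2 A (c • z) (c • w) = innA2 A z w := by
  simp only [innA2, Prod.smul_fst, Prod.smul_snd, innA_smul_smul_of_norm_eq_one hc]

lemma dwA2_eq_of_intertwine {T T' : H × H →L[ℂ] H × H} (U : H × H → H × H)
    (hU : Function.Surjective U) (hUA : ∀ z w, innA2 A (U z) (U w) = innA2 A z w)
    {c : ℂ} (hc : ‖c‖ = 1) (hT : ∀ z, T' (U z) = c • U (T z)) :
    dwA2 A T' = dwA2 A T := by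
  have hnorm : ∀ z, normA2 A (U z) = normA2 A z := fun z => by rw [normA2, normA2, hUA]
  have hnormT : ∀ z, normA2 A (T' (U z)) = normA2 A (T z) := fun z => by
    rw [hT, normA2, normA2, innA2_smul_smul_of_norm_eq_one hc, hUA]
  have hinnT : ∀ z, ‖innA2 A (T' (U z)) (U z)‖ = ‖innA2 A (T z) z‖ := fun z => by
    rw [hT, innA2_smul_left, hUA, norm_mul, Complex.norm_conj, hc, one_mul]
  unfold dwA2
  congr 1
  ext r
  constructor
  · rintro ⟨z', hz', rfl⟩
    obtain ⟨z, rfl⟩ := hU z'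
    exact ⟨z, hnorm z ▸ hz', by rw [hnormT, hinnT]⟩
  · rintro ⟨z, hz, rfl⟩
    exact ⟨U z, (hnorm z).trans hz, by rw [hnormT, hinnT]⟩

lemma dwA2_offDiag_comm (X Y : H →L[ℂ] H) : dwA2 A (offDiag X Y) = dwA2 A (offDiag Y X) :=
  (dwA2_eq_of_intertwine Prod.swap Prod.swap_surjective
    (fun z w => add_comm (innA A z.2 w.2) (innA A z.1 w.1)) norm_one
    (fun _ => (one_smul ℂ _).symm)).symm

lemma dwA2_offDiag_smul_right {c : ℂ} (hc : ‖c‖ = 1) (X Y : H →L[ℂ] H) :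
    dwA2 A (offDiag X (c • Y)) = dwA2 A (offDiag X Y) := by
  obtain ⟨μ, hμc⟩ := IsAlgClosed.exists_pow_nat_eq c⁻¹ two_pos
  have hμ : ‖μ‖ = 1 := by
    rw [← pow_left_inj₀ (norm_nonneg μ) zero_le_one two_ne_zero, ← norm_pow, hμc, norm_inv, hc]
    simp
  have hμ0 : μ ≠ 0 := norm_ne_zero_iff.mp (hμ ▸ one_ne_zero)
  have hμμc : μ * (μ * c) = 1 := by
    rw [← mul_assoc, ← pow_two, hμc, inv_mul_cancel₀ (norm_ne_zero_iff.mp (hc ▸ one_ne_zero))]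
  refine (dwA2_eq_of_intertwine (fun z => (z.1, μ • z.2)) (fun z => ⟨(z.1, μ⁻¹ • z.2), ?_⟩)
    (fun z w => ?_) hμ (fun z => ?_)).symm
  · simp [smul_inv_smul₀ hμ0]
  · simp only [innA2, innA_smul_smul_of_norm_eq_one hμ]
  · simp [offDiag, smul_smul, hμμc]

end DW

variable {H : Type*} [NormedAddCommGroup H] [InnerProductSpace ℂ H] [CompleteSpace H]

theorem stmt15_general (A X Y : H →L[ℂ] H) (θ : ℝ) :
    dwA2 A (offDiag X (Complex.exp (θ * Complex.I) • Y)) = dwA2 A (offDiag X Y) ∧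
      dwA2 A (offDiag X Y) = dwA2 A (offDiag Y X) :=
  ⟨dwA2_offDiag_smul_right (Complex.norm_exp_ofReal_mul_I θ) X Y, dwA2_offDiag_comm X Y⟩

theorem stmt15 (A X Y : H →L[ℂ] H) (hA : A.IsPositive)
    (hX : IsABounded A X) (hY : IsABounded A Y) (θ : ℝ) :
    dwA2 A (offDiag X (Complex.exp (θ * Complex.I) • Y)) = dwA2 A (offDiag X Y) ∧
      dwA2 A (offDiag X Y) = dwA2 A (offDiag Y X) :=
  stmt15_general A X Y θ
end
end
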